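/- arXiv:1702.05560 — 4 statements merged into one kernel-verified Lean document; each statement's English description precedes it below -/
import Mathlib

section
/- Let (Ω, Σ, μ, S) be a dynamical system which is asymptotically stationary, and let Π ⊂ Σ be a π-system generating Σ such that lim_{k→∞} sup_{i∈ℕ} |μ(S^{-i}A ∩ S^{-k}S^{-i}B) − μ(S^{-i}A)μ(S^{-k}S^{-i}B)| = 0 for all A, B ∈ Π. Then this limit condition holds for all A, B ∈ Σ. -/
/-!
For fixed `B`, the sets `A` satisfying the uniform mixing condition form a Dynkin system, so the
π-λ theorem applies in each variable in turn. Complements are free, since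
`|μ(Aᶜ ∩ B) - μ(Aᶜ)μ(B)| = |μ(A ∩ B) - μ(A)μ(B)|`, and finite disjoint unions follow from
subadditivity of this defect in `A`. For a countable disjoint union one needs the remainders
`T_N = ⋃_{n > N} A_n` to be small uniformly along the orbit, `sup_j μ(S^{-j} T_N) → 0`. This is
where asymptotic stationarity enters: a sequence of measures converging setwise is uniformly
countably additive.
-/

open MeasureTheory Filter Set

open scoped Topology Function

section

variable {Ω : Type*} [MeasurableSpace Ω]

noncomputable def mixingDefect (μ : Measure Ω) (A B : Set Ω) : ℝ :=
  |μ.real (A ∩ B) - μ.real A * μ.real B|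

section MixingDefect

variable {μ : Measure Ω} {A A' : Set Ω}

lemma mixingDefect_nonneg (A B : Set Ω) : 0 ≤ mixingDefect μ A B := abs_nonneg _

lemma mixingDefect_comm (A B : Set Ω) : mixingDefect μ A B = mixingDefect μ B A := by
  rw [mixingDefect, mixingDefect, inter_comm, mul_comm]

lemma mixingDefect_empty_left (B : Set Ω) : mixingDefect μ ∅ B = 0 := by
  simp [mixingDefect]

variable [IsProbabilityMeasure μ]

lemma mixingDefect_le_measureReal_left (A B : Set Ω) : mixingDefect μ A B ≤ μ.real A :=
  abs_sub_le_of_nonneg_of_le measureReal_nonneg (measureReal_mono inter_subset_left)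
    (mul_nonneg measureReal_nonneg measureReal_nonneg)
    (mul_le_of_le_one_right measureReal_nonneg measureReal_le_one)

lemma mixingDefect_le_one (A B : Set Ω) : mixingDefect μ A B ≤ 1 :=
  (mixingDefect_le_measureReal_left A B).trans measureReal_le_one

lemma mixingDefect_compl_left (hA : MeasurableSet A) (B : Set Ω) :
    mixingDefect μ Aᶜ B = mixingDefect μ A B := by
  have h_inter : μ.real (Aᶜ ∩ B) = μ.real B - μ.real (A ∩ B) := by
    rw [← sdiff_eq_compl_inter, ← measureReal_inter_add_sdiff (s := B) hA, inter_comm]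
    ring
  rw [mixingDefect, mixingDefect, h_inter, probReal_compl_eq_one_sub hA, ← abs_neg]
  ring_nf

lemma mixingDefect_union_le (hd : Disjoint A A') (hA : MeasurableSet A) (B : Set Ω) :
    mixingDefect μ (A ∪ A') B ≤ mixingDefect μ A B + mixingDefect μ A' B := by
  have h_inter : μ.real ((A ∪ A') ∩ B) = μ.real (A ∩ B) + μ.real (A' ∩ B) := by
    rw [← measureReal_inter_add_sdiff (s := (A ∪ A') ∩ B) hA, inter_right_comm,
      union_inter_cancel_left, inter_sdiff_right_comm, union_sdiff_left, hd.symm.sdiff_eq_left]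
  rw [mixingDefect, mixingDefect, mixingDefect, h_inter, measureReal_union' hd hA]
  calc _ = |(μ.real (A ∩ B) - μ.real A * μ.real B) +
        (μ.real (A' ∩ B) - μ.real A' * μ.real B)| := by ring_nf
    _ ≤ _ := abs_add_le _ _

end MixingDefect

def UniformlyCountablyAdditive {ι : Type*} (ρ : ι → Measure Ω) : Prop :=
  ∀ T : ℕ → Set Ω, (∀ N, MeasurableSet (T N)) → Antitone T → ⋂ N, T N = ∅ →
    ∀ ε > 0, ∃ N, ∀ j, ρ j (T N) < ε

lemma UniformlyCountablyAdditive.comp {ι ι' : Type*} {ρ : ι → Measure Ω}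
    (h : UniformlyCountablyAdditive ρ) (g : ι' → ι) : UniformlyCountablyAdditive (ρ ∘ g) :=
  fun T hT hanti hempty ε hε => (h T hT hanti hempty ε hε).imp fun _ hN j => hN (g j)

/- A special case of the Vitali–Hahn–Saks theorem: finitely many measures are handled one at a time,
the tail of the sequence through the limit measure. -/
lemma uniformlyCountablyAdditive_of_tendsto {ρ : ℕ → Measure Ω} [∀ j, IsFiniteMeasure (ρ j)]
    {ν : Measure Ω} [IsFiniteMeasure ν]
    (h : ∀ A, MeasurableSet A → Tendsto (fun j => ρ j A) atTop (𝓝 (ν A))) :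
    UniformlyCountablyAdditive ρ := by
  intro T hT hanti hempty ε hε
  have hlim (σ : Measure Ω) [IsFiniteMeasure σ] : Tendsto (fun N => σ (T N)) atTop (𝓝 0) := by
    simpa [Function.comp_def, hempty] using tendsto_measure_iInter_atTop (μ := σ)
      (fun N => (hT N).nullMeasurableSet) hanti ⟨0, measure_ne_top _ _⟩
  obtain ⟨M, hM⟩ := ((hlim ν).eventually_lt_const hε).exists
  obtain ⟨I, hI⟩ := ((h _ (hT M)).eventually_lt_const hM).exists_forall_of_atTop
  obtain ⟨N, hN, hMN⟩ := (((eventually_all_finite (finite_Iio I)).2 fun j _ =>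
    (hlim (ρ j)).eventually_lt_const hε).and (eventually_ge_atTop M)).exists
  refine ⟨N, fun j => ?_⟩
  rcases lt_or_ge j I with hj | hj
  · exact hN j hj
  · exact (measure_mono (hanti hMN)).trans_lt (hI j hj)

section MixesUniformly

variable {κ ι : Type*} {μ : Measure Ω} {l : Filter κ} {Φ Ψ : κ → ι → Ω → Ω} {A B : Set Ω}

/- The theorem is the case `Φ k i = S^[i]`, `Ψ k i = S^[i] ∘ S^[k]`. For general families the
condition is symmetric under `(Φ, A) ↔ (Ψ, B)`, so closure properties need only be proved in `A`. -/
variable (μ l Φ Ψ) in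
def MixesUniformly (A B : Set Ω) : Prop :=
  Tendsto (fun k => ⨆ i, mixingDefect μ (Φ k i ⁻¹' A) (Ψ k i ⁻¹' B)) l (𝓝 0)

lemma MixesUniformly.symm (h : MixesUniformly μ l Φ Ψ A B) : MixesUniformly μ l Ψ Φ B A := by
  simpa only [MixesUniformly, mixingDefect_comm] using h

lemma mixesUniformly_empty_left : MixesUniformly μ l Φ Ψ ∅ B := by
  simpa [MixesUniformly, mixingDefect_empty_left] using tendsto_const_nhds

lemma iSup_mixingDefect_nonneg (k : κ) : 0 ≤ ⨆ i, mixingDefect μ (Φ k i ⁻¹' A) (Ψ k i ⁻¹' B) :=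
  Real.iSup_nonneg fun _ => mixingDefect_nonneg _ _

variable [IsProbabilityMeasure μ]

lemma mixingDefect_le_iSup (k : κ) (i : ι) :
    mixingDefect μ (Φ k i ⁻¹' A) (Ψ k i ⁻¹' B) ≤
      ⨆ j, mixingDefect μ (Φ k j ⁻¹' A) (Ψ k j ⁻¹' B) :=
  le_ciSup (f := fun j => mixingDefect μ (Φ k j ⁻¹' A) (Ψ k j ⁻¹' B))
    ⟨1, by rintro _ ⟨j, rfl⟩; exact mixingDefect_le_one _ _⟩ i

lemma MixesUniformly.compl_left (hΦ : ∀ k i, Measurable (Φ k i)) (hA : MeasurableSet A)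
    (h : MixesUniformly μ l Φ Ψ A B) : MixesUniformly μ l Φ Ψ Aᶜ B := by
  have hcompl (k : κ) (i : ι) : mixingDefect μ (Φ k i ⁻¹' Aᶜ) (Ψ k i ⁻¹' B) =
      mixingDefect μ (Φ k i ⁻¹' A) (Ψ k i ⁻¹' B) :=
    mixingDefect_compl_left (hΦ k i hA) _
  simpa only [MixesUniformly, hcompl] using h

lemma MixesUniformly.union_left {A' : Set Ω} (hΦ : ∀ k i, Measurable (Φ k i))
    (hd : Disjoint A A') (hA : MeasurableSet A) (h : MixesUniformly μ l Φ Ψ A B)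
    (h' : MixesUniformly μ l Φ Ψ A' B) : MixesUniformly μ l Φ Ψ (A ∪ A') B := by
  have hbound (k : κ) : ⨆ i, mixingDefect μ (Φ k i ⁻¹' (A ∪ A')) (Ψ k i ⁻¹' B) ≤
      (⨆ i, mixingDefect μ (Φ k i ⁻¹' A) (Ψ k i ⁻¹' B)) +
        ⨆ i, mixingDefect μ (Φ k i ⁻¹' A') (Ψ k i ⁻¹' B) := by
    refine Real.iSup_le (fun i => ?_)
      (add_nonneg (iSup_mixingDefect_nonneg k) (iSup_mixingDefect_nonneg k))
    rw [preimage_union]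
    exact (mixingDefect_union_le (hd.preimage _) (hΦ k i hA) _).trans
      (add_le_add (mixingDefect_le_iSup k i) (mixingDefect_le_iSup k i))
  exact squeeze_zero (fun k => iSup_mixingDefect_nonneg k) hbound (by simpa using h.add h')

lemma MixesUniformly.of_approx_left (hΦ : ∀ k i, Measurable (Φ k i))
    (happrox : ∀ ε > 0, ∃ A' ⊆ A, MeasurableSet A' ∧ MixesUniformly μ l Φ Ψ A' B ∧
      ∀ k i, μ.real (Φ k i ⁻¹' (A \ A')) ≤ ε) :
    MixesUniformly μ l Φ Ψ A B := by
  refine tendsto_order.2 ⟨fun b hb => Eventually.of_forall fun k =>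
    hb.trans_le (iSup_mixingDefect_nonneg k), fun ε hε => ?_⟩
  obtain ⟨A', hA'A, hA', hmix, hsmall⟩ := happrox (ε / 2) (half_pos hε)
  filter_upwards [hmix.eventually_lt_const (half_pos hε)] with k hk
  have hbound (i : ι) : mixingDefect μ (Φ k i ⁻¹' A) (Ψ k i ⁻¹' B) ≤
      (⨆ i, mixingDefect μ (Φ k i ⁻¹' A') (Ψ k i ⁻¹' B)) + ε / 2 := by
    rw [← union_sdiff_cancel hA'A, preimage_union]
    calc _ ≤ mixingDefect μ (Φ k i ⁻¹' A') (Ψ k i ⁻¹' B)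
          + mixingDefect μ (Φ k i ⁻¹' (A \ A')) (Ψ k i ⁻¹' B) :=
          mixingDefect_union_le (disjoint_sdiff_right.preimage _) (hΦ k i hA') _
      _ ≤ _ := add_le_add (mixingDefect_le_iSup k i)
          ((mixingDefect_le_measureReal_left _ _).trans (hsmall k i))
  calc _ ≤ (⨆ i, mixingDefect μ (Φ k i ⁻¹' A') (Ψ k i ⁻¹' B)) + ε / 2 :=
        Real.iSup_le hbound (add_nonneg (iSup_mixingDefect_nonneg k) (half_pos hε).le)
    _ < ε / 2 + ε / 2 := by gcongr
    _ = ε := add_halves ε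

lemma MixesUniformly.iUnion_left (hΦ : ∀ k i, Measurable (Φ k i))
    (hΦ_uca : UniformlyCountablyAdditive fun p : κ × ι => μ.map (Φ p.1 p.2))
    {f : ℕ → Set Ω} (hd : Pairwise (Disjoint on f)) (hf : ∀ n, MeasurableSet (f n))
    (h : ∀ n, MixesUniformly μ l Φ Ψ (f n) B) : MixesUniformly μ l Φ Ψ (⋃ n, f n) B := by
  have hacc_meas (N : ℕ) : MeasurableSet (accumulate f N) :=
    .iUnion fun n => .iUnion fun _ => hf n
  have hacc (N : ℕ) : MixesUniformly μ l Φ Ψ (accumulate f N) B := by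
    induction N with
    | zero => simpa using h 0
    | succ N ih =>
      rw [accumulate_succ]
      exact ih.union_left hΦ (disjoint_accumulate hd N.lt_succ_self) (hacc_meas N) (h _)
  have hrest_meas (N : ℕ) : MeasurableSet ((⋃ n, f n) \ accumulate f N) :=
    (MeasurableSet.iUnion hf).diff (hacc_meas N)
  refine of_approx_left hΦ fun ε hε => ?_
  obtain ⟨N, hN⟩ := hΦ_uca _ hrest_meas
    (fun _ _ hMN => sdiff_subset_sdiff_right (monotone_accumulate hMN))
    (by rw [← sdiff_iUnion, iUnion_accumulate, sdiff_self]) (ENNReal.ofReal ε) (by simpa using hε)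
  refine ⟨accumulate f N, accumulate_subset_iUnion N, hacc_meas N, hacc N, fun k i => ?_⟩
  have hsmall := hN (k, i)
  rw [Measure.map_apply (hΦ k i) (hrest_meas N)] at hsmall
  exact ENNReal.toReal_le_of_le_ofReal hε.le hsmall.le

lemma MixesUniformly.of_forall_mem_left {P : Set (Set Ω)}
    (hgen : ‹MeasurableSpace Ω› = MeasurableSpace.generateFrom P) (hP : IsPiSystem P)
    (hΦ : ∀ k i, Measurable (Φ k i))
    (hΦ_uca : UniformlyCountablyAdditive fun p : κ × ι => μ.map (Φ p.1 p.2))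
    (h : ∀ A ∈ P, MixesUniformly μ l Φ Ψ A B) (hA : MeasurableSet A) :
    MixesUniformly μ l Φ Ψ A B :=
  MeasurableSpace.induction_on_inter (C := fun A _ => MixesUniformly μ l Φ Ψ A B) hgen hP
    mixesUniformly_empty_left h (fun _ hA hmix => hmix.compl_left hΦ hA)
    (fun _ hd hf hmix => MixesUniformly.iUnion_left hΦ hΦ_uca hd hf hmix) A hA

theorem mixesUniformly_of_isPiSystem {P : Set (Set Ω)}
    (hgen : ‹MeasurableSpace Ω› = MeasurableSpace.generateFrom P) (hP : IsPiSystem P)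
    (hΦ : ∀ k i, Measurable (Φ k i)) (hΨ : ∀ k i, Measurable (Ψ k i))
    (hΦ_uca : UniformlyCountablyAdditive fun p : κ × ι => μ.map (Φ p.1 p.2))
    (hΨ_uca : UniformlyCountablyAdditive fun p : κ × ι => μ.map (Ψ p.1 p.2))
    (h : ∀ A ∈ P, ∀ B ∈ P, MixesUniformly μ l Φ Ψ A B) (hA : MeasurableSet A)
    (hB : MeasurableSet B) : MixesUniformly μ l Φ Ψ A B := by
  have hPB : ∀ B ∈ P, MixesUniformly μ l Φ Ψ A B := fun B hB =>
    .of_forall_mem_left hgen hP hΦ hΦ_uca (fun A hA => h A hA B hB) hA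
  exact (MixesUniformly.of_forall_mem_left hgen hP hΨ hΨ_uca (fun B hB => (hPB B hB).symm) hB).symm

end MixesUniformly

end

/-- Lemma 2.2: if the uniform mixing-type condition holds for all sets in a π-system
generating the σ-algebra, and the system is asymptotically stationary, then the
condition holds for all measurable sets. -/
theorem stmt_4 {Ω : Type*} [m : MeasurableSpace Ω] (μ ν : Measure Ω)
    [IsProbabilityMeasure μ] (S : Ω → Ω) (hS : Measurable S)
    (P : Set (Set Ω)) (hPi : IsPiSystem P) (hgen : m = MeasurableSpace.generateFrom P)
    (hstat : ∀ A : Set Ω, MeasurableSet A →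
      Tendsto (fun k : ℕ => μ (S^[k] ⁻¹' A)) atTop (nhds (ν A)))
    (hP : ∀ A ∈ P, ∀ B ∈ P,
      Tendsto (fun k : ℕ => ⨆ i : ℕ,
        |(μ (S^[i] ⁻¹' A ∩ S^[k] ⁻¹' (S^[i] ⁻¹' B))).toReal -
          (μ (S^[i] ⁻¹' A)).toReal * (μ (S^[k] ⁻¹' (S^[i] ⁻¹' B))).toReal|)
        atTop (nhds 0)) :
    ∀ A B : Set Ω, MeasurableSet A → MeasurableSet B →
      Tendsto (fun k : ℕ => ⨆ i : ℕ,
        |(μ (S^[i] ⁻¹' A ∩ S^[k] ⁻¹' (S^[i] ⁻¹' B))).toReal -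
          (μ (S^[i] ⁻¹' A)).toReal * (μ (S^[k] ⁻¹' (S^[i] ⁻¹' B))).toReal|)
        atTop (nhds 0) := by
  have hν_univ : ν univ = 1 := by
    simpa using tendsto_nhds_unique (hstat univ .univ) (by simp)
  have : IsFiniteMeasure ν := ⟨by simp [hν_univ]⟩
  have hρ : UniformlyCountablyAdditive fun j => μ.map S^[j] :=
    uniformlyCountablyAdditive_of_tendsto (ν := ν) fun A hA => by
      simpa only [Measure.map_apply (hS.iterate _) hA] using hstat A hA
  intro A B hA hB
  exact mixesUniformly_of_isPiSystem (Φ := fun _ i => S^[i]) (Ψ := fun k i => S^[i] ∘ S^[k])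
    hgen hPi (fun _ i => hS.iterate i) (fun k i => (hS.iterate i).comp (hS.iterate k))
    (hρ.comp Prod.snd)
    (by simpa only [Function.comp_def, Function.iterate_add] using
      hρ.comp fun p : ℕ × ℕ => p.2 + p.1)
    hP hA hB
end

section
/- For any dynamical system (Ω, Σ, μ, S), the system (Ω^ℕ, Σ^ℕ, μ^ℕ, S^ℕ), where S^ℕ((ω_n)_n) = (S(ω_{n+1}))_n, is mixing: lim_{k→∞} |μ^ℕ((S^ℕ)^{-k}A ∩ B) − μ^ℕ((S^ℕ)^{-k}A)μ^ℕ(B)| = 0 for all A, B ∈ Σ^ℕ. -/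
open MeasureTheory Filter Set

def shiftS {Ω : Type*} (S : Ω → Ω) : (ℕ → Ω) → (ℕ → Ω) := fun ω n => S (ω (n + 1))

open ProbabilityTheory
open scoped symmDiff Topology

/-!
The values of `M` on cylinders force `M` to be the product measure `μ^ℕ`. The `k`-th iterate of
`shiftS S` reads only the coordinates `≥ k`, while `B` is approximated in measure by a set `B'`
depending on finitely many coordinates, hence on coordinates `< k` once `k` is large. Under `μ^ℕ`
these two groups of coordinates are independent, so `(shiftS S)^[k] ⁻¹' A` is independent of `B'`,
and the mixing defect is at most twice `M (B ∆ B')`.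
-/

section Approximation

variable {Ω : Type*} {m : MeasurableSpace Ω}

lemma isSetAlgebra_setOf_exists_measurableSet {ι : Type*} [SemilatticeSup ι] [Nonempty ι]
    {F : ι → MeasurableSpace Ω} (hF : Monotone F) :
    IsSetAlgebra {s | ∃ i, MeasurableSet[F i] s} where
  empty_mem := ⟨Classical.arbitrary ι, @MeasurableSet.empty _ (F _)⟩
  compl_mem := by
    rintro s ⟨i, hs⟩
    exact ⟨i, hs.compl⟩
  union_mem := by
    rintro s t ⟨i, hs⟩ ⟨j, ht⟩
    exact ⟨i ⊔ j, (hF le_sup_left _ hs).union (hF le_sup_right _ ht)⟩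

lemma abs_measureReal_inter_sub_mul_le (μ : Measure Ω) [IsProbabilityMeasure μ]
    {C B B' : Set Ω} (hC : MeasurableSet C) (hB : MeasurableSet B) (hB' : MeasurableSet B')
    (hindep : μ (C ∩ B') = μ C * μ B') :
    |μ.real (C ∩ B) - μ.real C * μ.real B| ≤ 2 * μ.real (B ∆ B') := by
  have hreal : μ.real (C ∩ B') = μ.real C * μ.real B' := by
    simp only [measureReal_def, hindep, ENNReal.toReal_mul]
  have hinter : |μ.real (C ∩ B) - μ.real (C ∩ B')| ≤ μ.real (B ∆ B') := by
    refine (abs_measureReal_sub_le_measureReal_symmDiff (hC.inter hB).nullMeasurableSet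
      (hC.inter hB').nullMeasurableSet).trans (measureReal_mono ?_)
    rw [← inter_symmDiff_distrib_left]
    exact inter_subset_right
  have hB'B : |μ.real B' - μ.real B| ≤ μ.real (B ∆ B') := by
    rw [abs_sub_comm]
    exact abs_measureReal_sub_le_measureReal_symmDiff hB.nullMeasurableSet hB'.nullMeasurableSet
  calc |μ.real (C ∩ B) - μ.real C * μ.real B|
      = |(μ.real (C ∩ B) - μ.real (C ∩ B')) + μ.real C * (μ.real B' - μ.real B)| := by
        rw [hreal]
        congr 1
        ring
    _ ≤ |μ.real (C ∩ B) - μ.real (C ∩ B')| + μ.real C * |μ.real B' - μ.real B| :=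
        (abs_add_le _ _).trans_eq (by rw [abs_mul, abs_of_nonneg measureReal_nonneg])
    _ ≤ μ.real (B ∆ B') + 1 * μ.real (B ∆ B') := by
        gcongr
        exact measureReal_le_one
    _ = 2 * μ.real (B ∆ B') := by ring

lemma tendsto_abs_measureReal_inter_sub_mul {ι : Type*} [SemilatticeSup ι] [Nonempty ι]
    (μ : Measure Ω) [IsProbabilityMeasure μ] {F : ι → MeasurableSpace Ω} (hF : Monotone F)
    (hF_sup : ⨆ i, F i = m) {C : ι → Set Ω} (hC : ∀ i, MeasurableSet (C i))
    (hindep : ∀ i s, MeasurableSet[F i] s → μ (C i ∩ s) = μ (C i) * μ s)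
    {B : Set Ω} (hB : MeasurableSet B) :
    Tendsto (fun i => |μ.real (C i ∩ B) - μ.real (C i) * μ.real B|) atTop (𝓝 0) := by
  have hdense : μ.MeasureDense {s | ∃ i, MeasurableSet[F i] s} :=
    .of_generateFrom_isSetAlgebra_finite μ (isSetAlgebra_setOf_exists_measurableSet hF)
      (by rw [← hF_sup, MeasurableSpace.measurableSpace_iSup_eq])
  rw [Metric.tendsto_atTop]
  intro ε hε
  obtain ⟨B', ⟨i₀, hB'i₀⟩, hBB'⟩ :=
    hdense.approx B hB (measure_ne_top μ B) (ε / 2) (half_pos hε)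
  have hBB'real : μ.real (B ∆ B') < ε / 2 := ENNReal.toReal_lt_of_lt_ofReal hBB'
  refine ⟨i₀, fun i hi => ?_⟩
  rw [Real.dist_eq, sub_zero, abs_abs]
  have hB'i : MeasurableSet[F i] B' := hF hi _ hB'i₀
  calc |μ.real (C i ∩ B) - μ.real (C i) * μ.real B| ≤ 2 * μ.real (B ∆ B') :=
        abs_measureReal_inter_sub_mul_le μ (hC i) hB (hdense.measurable B' ⟨i₀, hB'i₀⟩)
          (hindep i B' hB'i)
    _ < ε := by linarith

end Approximation

lemma indep_iSup_comap_eval_infinitePi {ι : Type*} {X : ι → Type*} [∀ i, MeasurableSpace (X i)]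
    (P : ∀ i, Measure (X i)) [∀ i, IsProbabilityMeasure (P i)] {s t : Set ι} (hst : Disjoint s t) :
    Indep (⨆ i ∈ s, MeasurableSpace.comap (fun x : ∀ i, X i => x i) inferInstance)
      (⨆ i ∈ t, MeasurableSpace.comap (fun x : ∀ i, X i => x i) inferInstance)
      (Measure.infinitePi P) :=
  indep_iSup_of_disjoint (fun i => (measurable_pi_apply i).comap_le)
    (iIndepFun_infinitePi (X := fun _ => id) fun _ => measurable_id).iIndep hst

lemma iSup_biSup_Iio_comap_eval {X : ℕ → Type*} [∀ n, MeasurableSpace (X n)] :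
    ⨆ k, ⨆ n ∈ Iio k, MeasurableSpace.comap (fun x : ∀ n, X n => x n) inferInstance =
      MeasurableSpace.pi :=
  le_antisymm
    (iSup_le fun _ => iSup₂_le fun n _ =>
      le_iSup (fun n => MeasurableSpace.comap (fun x : ∀ n, X n => x n) _) n)
    (iSup_le fun n => le_iSup_of_le (n + 1) (le_iSup₂_of_le n (Nat.lt_succ_self n) le_rfl))

section Shift

variable {Ω : Type*}

lemma shiftS_iterate_apply (S : Ω → Ω) (k : ℕ) (ω : ℕ → Ω) (n : ℕ) :
    (shiftS S)^[k] ω n = S^[k] (ω (n + k)) := by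
  induction k generalizing ω n with
  | zero => rfl
  | succ k ih =>
    rw [Function.iterate_succ_apply, ih]
    rfl

variable [MeasurableSpace Ω]

lemma measurable_shiftS_iterate {S : Ω → Ω} (hS : Measurable S) (k : ℕ) :
    @Measurable _ _ (⨆ n ∈ Ici k, MeasurableSpace.comap (fun ω : ℕ → Ω => ω n) inferInstance)
      MeasurableSpace.pi ((shiftS S)^[k]) := by
  refine (@measurable_pi_iff _ _ _ (⨆ n ∈ Ici k, _) _ _).mpr fun n => ?_
  simp_rw [shiftS_iterate_apply]
  exact (hS.iterate k).comp ((comap_measurable _).mono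
    (le_iSup₂_of_le (n + k) (Nat.le_add_left k n) le_rfl) le_rfl)

lemma eq_infinitePi_of_measure_cylinder {μ : Measure Ω} [IsProbabilityMeasure μ]
    {M : Measure (ℕ → Ω)}
    (hM : ∀ (An : ℕ → Set Ω), (∀ n, MeasurableSet (An n)) → ∀ m : ℕ,
      (∀ n > m, An n = univ) → M {f | ∀ n, f n ∈ An n} = ∏ n ∈ Finset.range (m + 1), μ (An n)) :
    M = Measure.infinitePi fun _ => μ := by
  classical
  refine Measure.eq_infinitePi _ fun s t ht => ?_
  set An : ℕ → Set Ω := fun n => if n ∈ s then t n else univ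
  have hs : s ⊆ Finset.range (s.sup id + 1) := fun n hn =>
    Finset.mem_range_succ_iff.mpr (Finset.le_sup (f := id) hn)
  have hAn_univ : ∀ n ∉ s, An n = univ := fun n hn => if_neg hn
  calc M (Set.pi s t) = M {f | ∀ n, f n ∈ An n} := by
        congr 1
        ext f
        refine forall_congr' fun n => ?_
        by_cases hn : n ∈ s <;> simp [An, hn]
    _ = ∏ n ∈ Finset.range (s.sup id + 1), μ (An n) :=
        hM An (fun n => by by_cases hn : n ∈ s <;> simp [An, hn, ht n]) _ fun n hn =>
          hAn_univ n fun h => (Finset.le_sup (f := id) h).not_gt hn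
    _ = ∏ n ∈ s, μ (t n) := by
        rw [← Finset.prod_subset hs fun n _ hn => by rw [hAn_univ n hn, measure_univ]]
        exact Finset.prod_congr rfl fun n hn => by simp [An, hn]

end Shift

theorem stmt_12_general {Ω : Type*} [MeasurableSpace Ω] (μ : Measure Ω)
    [IsProbabilityMeasure μ] (S : Ω → Ω) (hS : Measurable S)
    (M : Measure (ℕ → Ω))
    (hM : ∀ (An : ℕ → Set Ω), (∀ n, MeasurableSet (An n)) → ∀ m : ℕ,
      (∀ n > m, An n = Set.univ) →
      M {f : ℕ → Ω | ∀ n, f n ∈ An n} = ∏ n ∈ Finset.range (m + 1), μ (An n)) :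
    ∀ A B : Set (ℕ → Ω), MeasurableSet A → MeasurableSet B →
      Tendsto (fun k : ℕ =>
        |(M ((shiftS S)^[k] ⁻¹' A ∩ B)).toReal -
          (M ((shiftS S)^[k] ⁻¹' A)).toReal * (M B).toReal|)
        atTop (nhds 0) := by
  intro A B hA hB
  obtain rfl : M = Measure.infinitePi fun _ => μ := eq_infinitePi_of_measure_cylinder hM
  set F : ℕ → MeasurableSpace (ℕ → Ω) :=
    fun k => ⨆ n ∈ Iio k, MeasurableSpace.comap (fun ω : ℕ → Ω => ω n) inferInstance
  have hF : Monotone F := fun _ _ h => biSup_mono fun _ hn => lt_of_lt_of_le hn h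
  have hC (k : ℕ) : MeasurableSet ((shiftS S)^[k] ⁻¹' A) :=
    iSup₂_le (fun n _ => (measurable_pi_apply n).comap_le) _ (measurable_shiftS_iterate hS k hA)
  have hindep (k : ℕ) (s : Set (ℕ → Ω)) (hs : MeasurableSet[F k] s) :
      Measure.infinitePi (fun _ => μ) ((shiftS S)^[k] ⁻¹' A ∩ s) =
        Measure.infinitePi (fun _ => μ) ((shiftS S)^[k] ⁻¹' A) *
          Measure.infinitePi (fun _ => μ) s :=
    (Indep_iff _ _ _).1
      (indep_iSup_comap_eval_infinitePi _ (Iio_disjoint_Ici le_rfl)).symm _ _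
      (measurable_shiftS_iterate hS k hA) hs
  exact tendsto_abs_measureReal_inter_sub_mul _ hF iSup_biSup_Iio_comap_eval hC hindep hB

/-- For any dynamical system `(Ω, Σ, μ, S)`, the system `(Ω^ℕ, Σ^ℕ, μ^ℕ, Sℕ)` is
mixing, where `μ^ℕ` is the infinite product measure (characterized by its values on
cylinder sets). -/
theorem stmt_12 {Ω : Type*} [MeasurableSpace Ω] (μ : Measure Ω)
    [IsProbabilityMeasure μ] (S : Ω → Ω) (hS : Measurable S)
    (M : Measure (ℕ → Ω)) [IsProbabilityMeasure M]
    (hM : ∀ (An : ℕ → Set Ω), (∀ n, MeasurableSet (An n)) → ∀ m : ℕ,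
      (∀ n > m, An n = Set.univ) →
      M {f : ℕ → Ω | ∀ n, f n ∈ An n} = ∏ n ∈ Finset.range (m + 1), μ (An n)) :
    ∀ A B : Set (ℕ → Ω), MeasurableSet A → MeasurableSet B →
      Tendsto (fun k : ℕ =>
        |(M ((shiftS S)^[k] ⁻¹' A ∩ B)).toReal -
          (M ((shiftS S)^[k] ⁻¹' A)).toReal * (M B).toReal|)
        atTop (nhds 0) :=
  stmt_12_general μ S hS M hM
end

section
/- Let E be a separable metric space, μ a Borel probability measure on E, S : E → E Borel measurable. Assume: (1) for every Borel set A, sup_{i∈ℕ} |μ(S^{-i}A ∩ S^{-k}S^{-i}A) − μ(S^{-i}A)μ(S^{-k}S^{-i}A)| → 0 as k → ∞; and (2) (E, B(E), μ, S) is asymptotically stationary with stationary limit ν. Define μ_n on B(E^n) by μ_n(A) = μ{x ∈ E : (S(x),…,S^n(x)) ∈ A}. Then for every g ∈ C_b(E), ∫_{E^n} |(1/n)∑_{i=1}^n g(x_i) − ∫_E g dν|² dμ_n → 0 as n → ∞. -/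
/-!
Write `Aₙ = n⁻¹ ∑_{i<n} g ∘ S^{i+1}`, the Birkhoff average of `g ∘ S`. Pushing `μₙ` back to `μ`,
the integral in question is `∫ (Aₙ - ∫ g dν)² dμ = Var Aₙ + (𝔼 Aₙ - ∫ g dν)²`.

Bias: asymptotic stationarity is setwise convergence of `μ ∘ S^{-k}` to `ν`; testing it on uniform
approximations of `g` by simple functions gives `∫ g ∘ Sᵏ dμ → ∫ g dν`, so `𝔼 Aₙ → ∫ g ∘ S dν`
by Cesàro, and `ν` is `S`-invariant.

Variance: `Var Aₙ ≤ (2/n) ∑_{d<n} φ(d)` with `φ(d) = supᵢ |cov(g ∘ Sⁱ, g ∘ S^{i+d})|`, so it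
suffices that `φ(d) → 0`. Hypothesis (1) says this for indicators. For a simple function
`∑ cⱼ 1_{Aⱼ}` with disjoint `Aⱼ`, polarization writes the symmetrised cross covariances of `1_{Aⱼ}`
and `1_{Aₗ}` through the diagonal ones of `Aⱼ`, `Aₗ` and `Aⱼ ∪ Aₗ`; uniform approximation then
passes to `g`.
-/

open MeasureTheory ProbabilityTheory Filter Set Topology Function

theorem tendsto_of_abs_sub_le_add {ι : Type*} {l : Filter ι} {a : ι → ℝ} {L : ℝ} {r : ℝ → ℝ}
    (hr : Tendsto r (𝓝 0) (𝓝 0))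
    (h : ∀ δ > 0, ∃ b : ι → ℝ, Tendsto b l (𝓝 0) ∧ ∀ k, |a k - L| ≤ b k + r δ) :
    Tendsto a l (𝓝 L) := by
  rw [Metric.tendsto_nhds]
  intro ε hε
  obtain ⟨δ, hrδ, hδ⟩ :=
    (((hr.mono_left nhdsWithin_le_nhds).eventually (gt_mem_nhds (half_pos hε))).and
      (self_mem_nhdsWithin (s := Ioi 0))).exists
  obtain ⟨b, hb, hab⟩ := h δ hδ
  filter_upwards [hb.eventually (gt_mem_nhds (half_pos hε))] with k hk
  rw [Real.dist_eq]
  linarith [hab k]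

theorem abs_sum_sum_mul_mul_le_of_abs_add_swap_le {ι : Type*} (F : Finset ι) (c : ι → ℝ)
    (β : ι → ι → ℝ) {K : ℝ} (hβ : ∀ j ∈ F, ∀ l ∈ F, |β j l + β l j| ≤ K) :
    |∑ j ∈ F, ∑ l ∈ F, c j * c l * β j l| ≤ K / 2 * (∑ j ∈ F, |c j|) ^ 2 := by
  have hsymmetrize : 2 * ∑ j ∈ F, ∑ l ∈ F, c j * c l * β j l
      = ∑ j ∈ F, ∑ l ∈ F, c j * c l * (β j l + β l j) := by
    rw [two_mul]
    nth_rewrite 2 [Finset.sum_comm]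
    simp only [← Finset.sum_add_distrib]
    exact Finset.sum_congr rfl fun j _ ↦ Finset.sum_congr rfl fun l _ ↦ by ring
  have hbound : |∑ j ∈ F, ∑ l ∈ F, c j * c l * (β j l + β l j)|
      ≤ ∑ j ∈ F, ∑ l ∈ F, |c j| * |c l| * K := by
    refine (Finset.abs_sum_le_sum_abs _ _).trans (Finset.sum_le_sum fun j hj ↦ ?_)
    refine (Finset.abs_sum_le_sum_abs _ _).trans (Finset.sum_le_sum fun l hl ↦ ?_)
    rw [abs_mul, abs_mul]
    exact mul_le_mul_of_nonneg_left (hβ j hj l hl) (by positivity)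
  have hsq : ∑ j ∈ F, ∑ l ∈ F, |c j| * |c l| * K = K * (∑ j ∈ F, |c j|) ^ 2 := by
    rw [sq, Finset.sum_mul_sum, Finset.mul_sum]
    simp_rw [Finset.mul_sum]
    exact Finset.sum_congr rfl fun j _ ↦ Finset.sum_congr rfl fun l _ ↦ by ring
  rw [← hsymmetrize, hsq, abs_mul, abs_two] at hbound
  linarith

section ProbabilitySpace

variable {Ω : Type*} [MeasurableSpace Ω] {μ : Measure Ω} [IsProbabilityMeasure μ]

theorem abs_integral_le_of_forall_abs_le {X : Ω → ℝ} {a : ℝ} (hX : ∀ ω, |X ω| ≤ a) :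
    |∫ ω, X ω ∂μ| ≤ a := by
  simpa using norm_integral_le_of_norm_le_const (μ := μ) (f := X) (ae_of_all _ hX)

theorem abs_covariance_le_of_forall_abs_le {X Y : Ω → ℝ} {a b : ℝ}
    (hX : ∀ ω, |X ω| ≤ a) (hY : ∀ ω, |Y ω| ≤ b) : |cov[X, Y; μ]| ≤ 4 * a * b := by
  have hX' : ∀ ω, |X ω - μ[X]| ≤ 2 * a := fun ω ↦
    (abs_sub _ _).trans (by linarith [hX ω, abs_integral_le_of_forall_abs_le (μ := μ) hX])
  have hY' : ∀ ω, |Y ω - μ[Y]| ≤ 2 * b := fun ω ↦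
    (abs_sub _ _).trans (by linarith [hY ω, abs_integral_le_of_forall_abs_le (μ := μ) hY])
  calc |cov[X, Y; μ]| ≤ 2 * a * (2 * b) := abs_integral_le_of_forall_abs_le fun ω ↦ by
        rw [abs_mul]
        exact mul_le_mul (hX' ω) (hY' ω) (abs_nonneg _) ((abs_nonneg _).trans (hX' ω))
    _ = 4 * a * b := by ring

theorem memLp_of_forall_abs_le {X : Ω → ℝ} (hX : Measurable X) {a : ℝ} (hXa : ∀ ω, |X ω| ≤ a)
    (p : ENNReal) : MemLp X p μ :=
  .of_bound hX.aestronglyMeasurable a (ae_of_all _ hXa)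

theorem abs_covariance_sub_covariance_le {X X' Y Y' : Ω → ℝ} (hX : Measurable X)
    (hX' : Measurable X') (hY : Measurable Y) (hY' : Measurable Y') {a b δ : ℝ}
    (hXX' : ∀ ω, |X ω - X' ω| ≤ δ) (hYY' : ∀ ω, |Y ω - Y' ω| ≤ δ)
    (hX'a : ∀ ω, |X' ω| ≤ a) (hYb : ∀ ω, |Y ω| ≤ b) :
    |cov[X, Y; μ] - cov[X', Y'; μ]| ≤ 4 * δ * (a + b) := by
  have hXb : ∀ ω, |X ω| ≤ a + δ := fun ω ↦ by
    linarith [abs_sub_abs_le_abs_sub (X ω) (X' ω), hXX' ω, hX'a ω]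
  have hY'b : ∀ ω, |Y' ω| ≤ b + δ := fun ω ↦ by
    linarith [abs_sub_abs_le_abs_sub (Y' ω) (Y ω), abs_sub_comm (Y ω) (Y' ω), hYY' ω, hYb ω]
  have hsplit : cov[X, Y; μ] - cov[X', Y'; μ]
      = cov[fun ω ↦ X ω - X' ω, Y; μ] + cov[X', fun ω ↦ Y ω - Y' ω; μ] := by
    rw [covariance_fun_sub_left (memLp_of_forall_abs_le hX hXb 2)
        (memLp_of_forall_abs_le hX' hX'a 2) (memLp_of_forall_abs_le hY hYb 2),
      covariance_fun_sub_right (memLp_of_forall_abs_le hX' hX'a 2)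
        (memLp_of_forall_abs_le hY hYb 2) (memLp_of_forall_abs_le hY' hY'b 2)]
    ring
  rw [hsplit]
  refine (abs_add_le _ _).trans ?_
  linarith [abs_covariance_le_of_forall_abs_le (μ := μ) hXX' hYb,
    abs_covariance_le_of_forall_abs_le (μ := μ) hX'a hYY']

theorem memLp_indicator_one (p : ENNReal) {A : Set Ω} (hA : MeasurableSet A) :
    MemLp (A.indicator (1 : Ω → ℝ)) p μ :=
  memLp_indicator_const p hA (1 : ℝ) (by simp)

theorem covariance_indicator_one {B C : Set Ω} (hB : MeasurableSet B) (hC : MeasurableSet C) :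
    cov[B.indicator 1, C.indicator 1; μ] = μ.real (B ∩ C) - μ.real B * μ.real C := by
  rw [covariance_eq_sub (memLp_indicator_one 2 hB) (memLp_indicator_one 2 hC),
    ← inter_indicator_one, integral_indicator_one (hB.inter hC), integral_indicator_one hB,
    integral_indicator_one hC]

theorem integral_sub_sq_eq_variance_add {X : Ω → ℝ} (hX : MemLp X 2 μ) (c : ℝ) :
    ∫ ω, (X ω - c) ^ 2 ∂μ = Var[X; μ] + (μ[X] - c) ^ 2 := by
  have hXc : MemLp (fun ω ↦ X ω - c) 2 μ := hX.sub (memLp_const c)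
  rw [← variance_sub_const hX.aestronglyMeasurable c, variance_eq_sub hXc,
    integral_sub (hX.integrable one_le_two) (integrable_const c)]
  simp

theorem covariance_indicator_union {B₁ B₂ C₁ C₂ : Set Ω} (hB₁ : MeasurableSet B₁)
    (hB₂ : MeasurableSet B₂) (hC₁ : MeasurableSet C₁) (hC₂ : MeasurableSet C₂)
    (hB : Disjoint B₁ B₂) (hC : Disjoint C₁ C₂) :
    cov[(B₁ ∪ B₂).indicator 1, (C₁ ∪ C₂).indicator 1; μ]
      = cov[B₁.indicator 1, C₁.indicator 1; μ] + cov[B₁.indicator 1, C₂.indicator 1; μ]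
        + cov[B₂.indicator 1, C₁.indicator 1; μ] + cov[B₂.indicator 1, C₂.indicator 1; μ] := by
  have hL {A : Set Ω} (hA : MeasurableSet A) := memLp_indicator_one (μ := μ) 2 hA
  rw [indicator_union_of_disjoint hB, indicator_union_of_disjoint hC]
  change cov[B₁.indicator 1 + B₂.indicator 1, C₁.indicator 1 + C₂.indicator 1; μ] = _
  rw [covariance_add_left (hL hB₁) (hL hB₂) ((hL hC₁).add (hL hC₂)),
    covariance_add_right (hL hB₁) (hL hC₁) (hL hC₂),
    covariance_add_right (hL hB₂) (hL hC₁) (hL hC₂)]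
  ring

theorem abs_covariance_sum_indicator_le {ι : Type*} (F : Finset ι) (c : ι → ℝ)
    {B C : ι → Set Ω} (hB : ∀ j, MeasurableSet (B j)) (hC : ∀ j, MeasurableSet (C j))
    (hBd : Pairwise (Disjoint on B)) (hCd : Pairwise (Disjoint on C)) {η : ℝ}
    (hη : ∀ j ∈ F, ∀ l ∈ F, |cov[(B j ∪ B l).indicator 1, (C j ∪ C l).indicator 1; μ]| ≤ η) :
    |cov[fun ω ↦ ∑ j ∈ F, c j * (B j).indicator 1 ω,
        fun ω ↦ ∑ j ∈ F, c j * (C j).indicator 1 ω; μ]|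
      ≤ 3 / 2 * η * (∑ j ∈ F, |c j|) ^ 2 := by
  set β : ι → ι → ℝ := fun j l ↦ cov[(B j).indicator 1, (C l).indicator 1; μ]
  have hdiag : ∀ j ∈ F, |β j j| ≤ η := fun j hj ↦ by simpa using hη j hj j hj
  -- only the symmetrised cross terms are controlled, through the union `B j ∪ B l`
  have hsymm : ∀ j ∈ F, ∀ l ∈ F, |β j l + β l j| ≤ 3 * η := by
    intro j hj l hl
    rcases eq_or_ne j l with rfl | hjl
    · linarith [abs_add_le (β j j) (β j j), hdiag j hj, abs_nonneg (β j j)]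
    · have hunion := covariance_indicator_union (μ := μ) (hB j) (hB l) (hC j) (hC l)
        (hBd hjl) (hCd hjl)
      have hsplit : β j l + β l j = cov[(B j ∪ B l).indicator 1, (C j ∪ C l).indicator 1; μ]
          - β j j - β l l := by
        simp only [β, hunion]; ring
      rw [hsplit]
      linarith [abs_sub (cov[(B j ∪ B l).indicator 1, (C j ∪ C l).indicator 1; μ] - β j j) (β l l),
        abs_sub (cov[(B j ∪ B l).indicator 1, (C j ∪ C l).indicator 1; μ]) (β j j),
        hη j hj l hl, hdiag j hj, hdiag l hl]
  have hexpand : cov[fun ω ↦ ∑ j ∈ F, c j * (B j).indicator 1 ω,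
      fun ω ↦ ∑ j ∈ F, c j * (C j).indicator 1 ω; μ] = ∑ j ∈ F, ∑ l ∈ F, c j * c l * β j l := by
    rw [covariance_fun_sum_fun_sum'
      (fun j _ ↦ (memLp_indicator_one 2 (hB j)).const_mul (c j))
      (fun j _ ↦ (memLp_indicator_one 2 (hC j)).const_mul (c j))]
    simp only [covariance_const_mul_left, covariance_const_mul_right, β]
    exact Finset.sum_congr rfl fun j _ ↦ Finset.sum_congr rfl fun l _ ↦ by ring
  rw [hexpand]
  exact (abs_sum_sum_mul_mul_le_of_abs_add_swap_le F c β hsymm).trans_eq (by ring)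

end ProbabilitySpace

section Approximation

variable {E : Type*} [MeasurableSpace E]

theorem exists_sum_indicator_abs_sub_le {g : E → ℝ} (hg : Measurable g) {M : ℝ}
    (hgM : ∀ x, |g x| ≤ M) {δ : ℝ} (hδ : 0 < δ) :
    ∃ (F : Finset ℤ) (c : ℤ → ℝ) (A : ℤ → Set E), (∀ j, MeasurableSet (A j)) ∧
      Pairwise (Disjoint on A) ∧ ∀ x, |g x - ∑ j ∈ F, c j * (A j).indicator 1 x| ≤ δ := by
  set level : E → ℤ := fun x ↦ ⌊g x / δ⌋
  refine ⟨Finset.Icc ⌊-M / δ⌋ ⌊M / δ⌋, fun j ↦ δ * j, fun j ↦ level ⁻¹' {j},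
    fun j ↦ (hg.div_const δ).floor (measurableSet_singleton j),
    fun j l hjl ↦ disjoint_left.2 fun x hj hl ↦ hjl (hj.symm.trans hl), fun x ↦ ?_⟩
  have hmem : level x ∈ Finset.Icc ⌊-M / δ⌋ ⌊M / δ⌋ := Finset.mem_Icc.2
    ⟨Int.floor_mono (div_le_div_of_nonneg_right (neg_le_of_abs_le (hgM x)) hδ.le),
      Int.floor_mono (div_le_div_of_nonneg_right (le_of_abs_le (hgM x)) hδ.le)⟩
  rw [Finset.sum_eq_single_of_mem _ hmem fun j _ hj ↦ by simp [Ne.symm hj]]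
  have hlow := Int.floor_le (g x / δ)
  have hhigh := Int.lt_floor_add_one (g x / δ)
  simp only [level, mem_preimage, mem_singleton_iff, indicator_of_mem, Pi.one_apply, mul_one]
  rw [abs_le]
  constructor <;> nlinarith [mul_div_cancel₀ (g x) hδ.ne']

theorem integral_sum_indicator (ρ : Measure E) [IsFiniteMeasure ρ] {ι : Type*} (F : Finset ι)
    (c : ι → ℝ) {A : ι → Set E} (hA : ∀ j, MeasurableSet (A j)) :
    ∫ x, ∑ j ∈ F, c j * (A j).indicator 1 x ∂ρ = ∑ j ∈ F, c j * ρ.real (A j) := by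
  rw [integral_finsetSum]
  · simp_rw [integral_const_mul, integral_indicator_one (hA _)]
  · exact fun j _ ↦ ((integrable_const (1 : ℝ)).indicator (hA j)).const_mul (c j)

theorem tendsto_integral_of_tendsto_measure {ι : Type*} {l : Filter ι} {μs : ι → Measure E}
    [∀ k, IsProbabilityMeasure (μs k)] {ν : Measure E} [IsProbabilityMeasure ν]
    (h : ∀ A, MeasurableSet A → Tendsto (fun k ↦ μs k A) l (𝓝 (ν A)))
    {g : E → ℝ} (hg : Measurable g) {M : ℝ} (hgM : ∀ x, |g x| ≤ M) :
    Tendsto (fun k ↦ ∫ x, g x ∂μs k) l (𝓝 (∫ x, g x ∂ν)) := by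
  refine tendsto_of_abs_sub_le_add (r := fun δ ↦ 2 * δ)
    ((continuous_const_mul 2).tendsto' 0 0 (mul_zero 2)) fun δ hδ ↦ ?_
  obtain ⟨F, c, A, hA, -, hgs⟩ := exists_sum_indicator_abs_sub_le hg hgM hδ
  set s : E → ℝ := fun x ↦ ∑ j ∈ F, c j * (A j).indicator 1 x
  have hs : Measurable s :=
    Finset.measurable_sum _ fun j _ ↦ (measurable_const.indicator (hA j)).const_mul (c j)
  have hsM : ∀ x, |s x| ≤ M + δ := fun x ↦ by
    linarith [abs_sub_abs_le_abs_sub (s x) (g x), abs_sub_comm (g x) (s x), hgs x, hgM x]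
  have hclose (ρ : Measure E) [IsProbabilityMeasure ρ] :
      |∫ x, g x ∂ρ - ∫ x, s x ∂ρ| ≤ δ := by
    rw [← integral_sub ((memLp_of_forall_abs_le hg hgM 1).integrable le_rfl)
      ((memLp_of_forall_abs_le hs hsM 1).integrable le_rfl)]
    exact abs_integral_le_of_forall_abs_le hgs
  have hsimple : Tendsto (fun k ↦ ∫ x, s x ∂μs k) l (𝓝 (∫ x, s x ∂ν)) := by
    simp only [s, integral_sum_indicator _ F c hA]
    exact tendsto_finsetSum _ fun j _ ↦ ((ENNReal.tendsto_toReal (measure_ne_top ν (A j))).comp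
      (h (A j) (hA j))).const_mul (c j)
  refine ⟨fun k ↦ |∫ x, s x ∂μs k - ∫ x, s x ∂ν|, ?_, fun k ↦ ?_⟩
  · simpa using (hsimple.sub_const (∫ x, s x ∂ν)).abs
  · have hμk := hclose (μs k)
    have hν := hclose ν
    calc |∫ x, g x ∂μs k - ∫ x, g x ∂ν|
        ≤ |∫ x, g x ∂μs k - ∫ x, s x ∂μs k| + |∫ x, s x ∂μs k - ∫ x, s x ∂ν|
          + |∫ x, g x ∂ν - ∫ x, s x ∂ν| := by
          linarith [abs_sub_le (∫ x, g x ∂μs k) (∫ x, s x ∂μs k) (∫ x, g x ∂ν),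
            abs_sub_le (∫ x, s x ∂μs k) (∫ x, s x ∂ν) (∫ x, g x ∂ν),
            abs_sub_comm (∫ x, s x ∂ν) (∫ x, g x ∂ν)]
      _ ≤ _ := by linarith

end Approximation

section LagCovariance

variable {E : Type*} [MeasurableSpace E]

noncomputable def lagCovSup (μ : Measure E) (S : E → E) (f : E → ℝ) (k : ℕ) : ℝ :=
  ⨆ i, |cov[f ∘ S^[i], f ∘ S^[i + k]; μ]|

variable {μ : Measure E} {S : E → E}

theorem lagCovSup_nonneg (f : E → ℝ) (k : ℕ) : 0 ≤ lagCovSup μ S f k :=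
  Real.iSup_nonneg fun _ ↦ abs_nonneg _

variable [IsProbabilityMeasure μ]

theorem abs_covariance_comp_iterate_le_lagCovSup {f : E → ℝ} {M : ℝ} (hfM : ∀ x, |f x| ≤ M)
    (i k : ℕ) : |cov[f ∘ S^[i], f ∘ S^[i + k]; μ]| ≤ lagCovSup μ S f k :=
  le_ciSup (f := fun i ↦ |cov[f ∘ S^[i], f ∘ S^[i + k]; μ]|) ⟨4 * M * M, by
    rintro _ ⟨i, rfl⟩
    exact abs_covariance_le_of_forall_abs_le (fun _ ↦ hfM _) (fun _ ↦ hfM _)⟩ i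

theorem abs_covariance_comp_iterate_le_lagCovSup_dist {f : E → ℝ} {M : ℝ}
    (hfM : ∀ x, |f x| ≤ M) (p q : ℕ) :
    |cov[f ∘ S^[p], f ∘ S^[q]; μ]| ≤ lagCovSup μ S f (Nat.dist p q) := by
  rcases le_total p q with hpq | hqp
  · obtain ⟨k, rfl⟩ := Nat.exists_eq_add_of_le hpq
    simpa [Nat.dist_eq_sub_of_le hpq] using abs_covariance_comp_iterate_le_lagCovSup hfM p k
  · obtain ⟨k, rfl⟩ := Nat.exists_eq_add_of_le hqp
    rw [covariance_comm, Nat.dist_comm]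
    simpa [Nat.dist_eq_sub_of_le hqp] using abs_covariance_comp_iterate_le_lagCovSup hfM q k

theorem lagCovSup_indicator_one (hS : Measurable S) {A : Set E} (hA : MeasurableSet A) (k : ℕ) :
    lagCovSup μ S (A.indicator 1) k = ⨆ i, |μ.real (S^[i] ⁻¹' A ∩ S^[k] ⁻¹' (S^[i] ⁻¹' A))
      - μ.real (S^[i] ⁻¹' A) * μ.real (S^[k] ⁻¹' (S^[i] ⁻¹' A))| := by
  refine iSup_congr fun i ↦ ?_
  rw [← preimage_comp, ← iterate_add]
  exact congrArg abs (covariance_indicator_one (hS.iterate i hA) (hS.iterate (i + k) hA))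

theorem abs_covariance_comp_iterate_sum_indicator_le (hS : Measurable S) {ι : Type*}
    (F : Finset ι) (c : ι → ℝ) {A : ι → Set E} (hA : ∀ j, MeasurableSet (A j))
    (hAd : Pairwise (Disjoint on A)) (i k : ℕ) :
    |cov[(fun x ↦ ∑ j ∈ F, c j * (A j).indicator 1 x) ∘ S^[i],
        (fun x ↦ ∑ j ∈ F, c j * (A j).indicator 1 x) ∘ S^[i + k]; μ]|
      ≤ 3 / 2 * (∑ p ∈ F ×ˢ F, lagCovSup μ S ((A p.1 ∪ A p.2).indicator 1) k)
        * (∑ j ∈ F, |c j|) ^ 2 := by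
  refine abs_covariance_sum_indicator_le F c (fun j ↦ hS.iterate i (hA j))
    (fun j ↦ hS.iterate (i + k) (hA j)) (fun j l hjl ↦ (hAd hjl).preimage _)
    (fun j l hjl ↦ (hAd hjl).preimage _) fun j hj l hl ↦ ?_
  rw [← preimage_union, ← preimage_union]
  refine (abs_covariance_comp_iterate_le_lagCovSup (μ := μ) (S := S)
    (f := (A j ∪ A l).indicator 1) (M := 1) (fun x ↦ ?_) i k).trans ?_
  · by_cases hx : x ∈ A j ∪ A l <;> simp [hx]
  · exact Finset.single_le_sum (f := fun p : ι × ι ↦ lagCovSup μ S ((A p.1 ∪ A p.2).indicator 1) k)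
      (fun _ _ ↦ lagCovSup_nonneg _ k) (a := (j, l)) (Finset.mk_mem_product hj hl)

theorem tendsto_lagCovSup_zero (hS : Measurable S)
    (h : ∀ A, MeasurableSet A → Tendsto (lagCovSup μ S (A.indicator 1)) atTop (𝓝 0))
    {f : E → ℝ} (hf : Measurable f) {M : ℝ} (hfM : ∀ x, |f x| ≤ M) :
    Tendsto (lagCovSup μ S f) atTop (𝓝 0) := by
  refine tendsto_of_abs_sub_le_add (r := fun δ ↦ 4 * δ * (M + δ + M))
    ((by fun_prop : Continuous fun δ : ℝ ↦ 4 * δ * (M + δ + M)).tendsto' 0 0 (by simp))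
    fun δ hδ ↦ ?_
  obtain ⟨F, c, A, hA, hAd, hfs⟩ := exists_sum_indicator_abs_sub_le hf hfM hδ
  set s : E → ℝ := fun x ↦ ∑ j ∈ F, c j * (A j).indicator 1 x
  have hs : Measurable s :=
    Finset.measurable_sum _ fun j _ ↦ (measurable_const.indicator (hA j)).const_mul (c j)
  have hsM : ∀ x, |s x| ≤ M + δ := fun x ↦ by
    linarith [abs_sub_abs_le_abs_sub (s x) (f x), abs_sub_comm (f x) (s x), hfs x, hfM x]
  refine ⟨fun k ↦ 3 / 2 * (∑ p ∈ F ×ˢ F, lagCovSup μ S ((A p.1 ∪ A p.2).indicator 1) k)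
    * (∑ j ∈ F, |c j|) ^ 2, ?_, fun k ↦ ?_⟩
  · simpa using ((tendsto_finsetSum _ fun p _ ↦ h _ ((hA p.1).union (hA p.2))).const_mul
      (3 / 2)).mul_const ((∑ j ∈ F, |c j|) ^ 2)
  rw [sub_zero, abs_of_nonneg (lagCovSup_nonneg f k)]
  refine ciSup_le fun i ↦ ?_
  have happrox := abs_covariance_sub_covariance_le (μ := μ) (hf.comp (hS.iterate i))
    (hs.comp (hS.iterate i)) (hf.comp (hS.iterate (i + k))) (hs.comp (hS.iterate (i + k)))
    (fun x ↦ hfs _) (fun x ↦ hfs _) (fun x ↦ hsM _) (fun x ↦ hfM _)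
  linarith [abs_covariance_comp_iterate_sum_indicator_le (μ := μ) hS F c hA hAd i k,
    abs_sub_abs_le_abs_sub (cov[f ∘ S^[i], f ∘ S^[i + k]; μ]) (cov[s ∘ S^[i], s ∘ S^[i + k]; μ])]

end LagCovariance

theorem sum_range_sum_range_dist_le {φ : ℕ → ℝ} (hφ : ∀ d, 0 ≤ φ d) (n : ℕ) :
    ∑ i ∈ Finset.range n, ∑ j ∈ Finset.range n, φ (Nat.dist i j)
      ≤ 2 * n * ∑ d ∈ Finset.range n, φ d := by
  -- `j ↦ (dist i j, j ≤ i)` is injective, so each distance occurs at most twice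
  have hrow : ∀ i ∈ Finset.range n,
      ∑ j ∈ Finset.range n, φ (Nat.dist i j) ≤ 2 * ∑ d ∈ Finset.range n, φ d := by
    intro i hi
    have hinj : InjOn (fun j ↦ (Nat.dist i j, decide (j ≤ i))) (Finset.range n) := by
      intro j _ l _ hjl
      simp only [Prod.mk.injEq, decide_eq_decide, Nat.dist] at hjl
      omega
    calc ∑ j ∈ Finset.range n, φ (Nat.dist i j)
        = ∑ p ∈ (Finset.range n).image fun j ↦ (Nat.dist i j, decide (j ≤ i)), φ p.1 :=
          (Finset.sum_image (f := fun p ↦ φ p.1) hinj).symm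
      _ ≤ ∑ p ∈ Finset.range n ×ˢ (Finset.univ : Finset Bool), φ p.1 := by
          refine Finset.sum_le_sum_of_subset_of_nonneg (fun p hp ↦ ?_) fun p _ _ ↦ hφ p.1
          obtain ⟨j, hj, rfl⟩ := Finset.mem_image.1 hp
          simp only [Finset.mem_product, Finset.mem_range, Finset.mem_univ, and_true, Nat.dist]
          simp only [Finset.mem_range] at hi hj
          omega
      _ = 2 * ∑ d ∈ Finset.range n, φ d := by
          rw [Finset.sum_product, Finset.mul_sum]
          simp [two_mul]
  calc _ ≤ ∑ _i ∈ Finset.range n, 2 * ∑ d ∈ Finset.range n, φ d := Finset.sum_le_sum hrow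
    _ = 2 * n * ∑ d ∈ Finset.range n, φ d := by
      rw [Finset.sum_const, Finset.card_range, nsmul_eq_mul]; ring

theorem variance_average_le {Ω : Type*} [MeasurableSpace Ω] {μ : Measure Ω} [IsFiniteMeasure μ]
    {X : ℕ → Ω → ℝ} (hX : ∀ i, MemLp (X i) 2 μ) {φ : ℕ → ℝ} (hφ : ∀ d, 0 ≤ φ d)
    (hcov : ∀ i j, |cov[X i, X j; μ]| ≤ φ (Nat.dist i j)) (n : ℕ) :
    Var[fun ω ↦ (n : ℝ)⁻¹ * ∑ i ∈ Finset.range n, X i ω; μ]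
      ≤ 2 * ((n : ℝ)⁻¹ * ∑ d ∈ Finset.range n, φ d) := by
  rw [variance_const_mul, variance_fun_sum' fun i _ ↦ hX i]
  calc (n : ℝ)⁻¹ ^ 2 * ∑ i ∈ Finset.range n, ∑ j ∈ Finset.range n, cov[X i, X j; μ]
      ≤ (n : ℝ)⁻¹ ^ 2 * (2 * n * ∑ d ∈ Finset.range n, φ d) := by
        refine mul_le_mul_of_nonneg_left ?_ (sq_nonneg _)
        refine le_trans (Finset.sum_le_sum fun i _ ↦ Finset.sum_le_sum fun j _ ↦ ?_)
          (sum_range_sum_range_dist_le hφ n)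
        exact (le_abs_self _).trans (hcov i j)
    _ = 2 * ((n : ℝ)⁻¹ * ∑ d ∈ Finset.range n, φ d) := by
        rcases eq_or_ne n 0 with rfl | hn
        · simp
        · field_simp

section Birkhoff

variable {E : Type*} [MeasurableSpace E] {μ : Measure E} {S : E → E}

theorem map_eq_self_of_tendsto_measure_preimage_iterate (hS : Measurable S) {ν : Measure E}
    (h : ∀ A, MeasurableSet A → Tendsto (fun k ↦ μ (S^[k] ⁻¹' A)) atTop (𝓝 (ν A))) :
    ν.map S = ν := by
  refine Measure.ext fun A hA ↦ ?_
  rw [Measure.map_apply hS hA]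
  refine tendsto_nhds_unique (h _ (hS hA))
    (((h A hA).comp (tendsto_add_atTop_nat 1)).congr fun k ↦ ?_)
  simp only [comp_apply, iterate_succ', preimage_comp]

variable [IsProbabilityMeasure μ]

theorem memLp_birkhoffAverage (hS : Measurable S) {f : E → ℝ} (hf : Measurable f) {M : ℝ}
    (hfM : ∀ x, |f x| ≤ M) (n : ℕ) (p : ENNReal) : MemLp (birkhoffAverage ℝ S f n) p μ :=
  (memLp_finsetSum _ fun i _ ↦
    memLp_of_forall_abs_le (hf.comp (hS.iterate i)) (fun _ ↦ hfM _) p).const_mul _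

theorem tendsto_variance_birkhoffAverage (hS : Measurable S)
    (h : ∀ A, MeasurableSet A → Tendsto (lagCovSup μ S (A.indicator 1)) atTop (𝓝 0))
    {f : E → ℝ} (hf : Measurable f) {M : ℝ} (hfM : ∀ x, |f x| ≤ M) :
    Tendsto (fun n ↦ Var[birkhoffAverage ℝ S f n; μ]) atTop (𝓝 0) := by
  have hφ := tendsto_lagCovSup_zero hS h hf hfM
  refine squeeze_zero (fun n ↦ variance_nonneg _ _)
    (variance_average_le (X := fun i ↦ f ∘ S^[i])
      (fun i ↦ memLp_of_forall_abs_le (hf.comp (hS.iterate i)) (fun _ ↦ hfM _) 2)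
      (lagCovSup_nonneg f) (abs_covariance_comp_iterate_le_lagCovSup_dist hfM))
    (by simpa using hφ.cesaro.const_mul 2)

theorem tendsto_integral_birkhoffAverage (hS : Measurable S) {ν : Measure E}
    [IsProbabilityMeasure ν]
    (h : ∀ A, MeasurableSet A → Tendsto (fun k ↦ μ (S^[k] ⁻¹' A)) atTop (𝓝 (ν A)))
    {f : E → ℝ} (hf : Measurable f) {M : ℝ} (hfM : ∀ x, |f x| ≤ M) :
    Tendsto (fun n ↦ ∫ x, birkhoffAverage ℝ S f n x ∂μ) atTop (𝓝 (∫ x, f x ∂ν)) := by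
  have (k : ℕ) : IsProbabilityMeasure (μ.map S^[k]) :=
    Measure.isProbabilityMeasure_map (hS.iterate k).aemeasurable
  have hlim := tendsto_integral_of_tendsto_measure (μs := fun k ↦ μ.map S^[k])
    (fun A hA ↦ by simpa [Measure.map_apply (hS.iterate _) hA] using h A hA) hf hfM
  simp only [integral_map (hS.iterate _).aemeasurable hf.aestronglyMeasurable] at hlim
  convert hlim.cesaro using 2 with n
  simp only [birkhoffAverage, birkhoffSum, smul_eq_mul]
  rw [integral_const_mul, integral_finsetSum]
  exact fun i _ ↦ (memLp_of_forall_abs_le (hf.comp (hS.iterate i)) (fun _ ↦ hfM _) 1).integrable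
    le_rfl

end Birkhoff

theorem integral_sq_average_eq_integral_sq_birkhoffAverage {E : Type*} [MeasurableSpace E]
    {μ : Measure E} {S : E → E} (hS : Measurable S) {g : E → ℝ} (hg : Measurable g) {n : ℕ}
    {ρ : Measure (Fin n → E)} (hρ : ∀ A, MeasurableSet A →
      ρ A = μ {x : E | (fun i : Fin n ↦ S^[(i : ℕ) + 1] x) ∈ A}) (c : ℝ) :
    ∫ x : Fin n → E, |(1 / (n : ℝ)) * ∑ i : Fin n, g (x i) - c| ^ 2 ∂ρ
      = ∫ x, (birkhoffAverage ℝ S (g ∘ S) n x - c) ^ 2 ∂μ := by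
  have hT : Measurable fun x (i : Fin n) ↦ S^[(i : ℕ) + 1] x :=
    measurable_pi_lambda _ fun i ↦ hS.iterate _
  have hF : Measurable fun v : Fin n → E ↦ |(1 / (n : ℝ)) * ∑ i : Fin n, g (v i) - c| ^ 2 :=
    (((Finset.measurable_sum _ fun i _ ↦ hg.comp (measurable_pi_apply i)).const_mul _).sub_const
      _).abs.pow_const 2
  have hρ_eq : ρ = μ.map fun x (i : Fin n) ↦ S^[(i : ℕ) + 1] x :=
    Measure.ext fun A hA ↦ by rw [hρ A hA, Measure.map_apply hT hA]; rfl
  rw [hρ_eq, integral_map hT.aemeasurable hF.aestronglyMeasurable]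
  refine integral_congr_ae (ae_of_all _ fun x ↦ ?_)
  simp only [sq_abs, birkhoffAverage, birkhoffSum, smul_eq_mul, one_div, comp_apply,
    iterate_succ_apply']
  rw [Fin.sum_univ_eq_sum_range (fun i ↦ g (S (S^[i] x))) n]

theorem stmt_17_general {E : Type*} [MetricSpace E]
    [MeasurableSpace E] [BorelSpace E]
    (μ ν : Measure E) [IsProbabilityMeasure μ]
    (S : E → E) (hS : Measurable S)
    (h1 : ∀ A : Set E, MeasurableSet A →
      Tendsto (fun k : ℕ => ⨆ i : ℕ,
        |(μ (S^[i] ⁻¹' A ∩ S^[k] ⁻¹' (S^[i] ⁻¹' A))).toReal -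
          (μ (S^[i] ⁻¹' A)).toReal * (μ (S^[k] ⁻¹' (S^[i] ⁻¹' A))).toReal|)
        atTop (nhds 0))
    (h2 : ∀ A : Set E, MeasurableSet A →
      Tendsto (fun k : ℕ => μ (S^[k] ⁻¹' A)) atTop (nhds (ν A)))
    (μn : ∀ n : ℕ, Measure (Fin n → E))
    (hμn : ∀ n, ∀ A : Set (Fin n → E), MeasurableSet A →
      μn n A = μ {x : E | (fun i : Fin n => S^[(i : ℕ) + 1] x) ∈ A}) :
    ∀ g : BoundedContinuousFunction E ℝ,
      Tendsto (fun n : ℕ =>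
          ∫ x : Fin n → E,
            |(1 / (n : ℝ)) * ∑ i : Fin n, g (x i) - ∫ y, g y ∂ν| ^ 2 ∂μn n)
        atTop (nhds 0) := by
  intro g
  have : IsProbabilityMeasure ν := ⟨tendsto_nhds_unique (h2 univ .univ) (by simp)⟩
  have hg : Measurable g := g.continuous.measurable
  have hgS : ∀ x, |(g ∘ S) x| ≤ ‖g‖ := fun x ↦ g.norm_coe_le_norm (S x)
  have hmixing (A : Set E) (hA : MeasurableSet A) :
      Tendsto (lagCovSup μ S (A.indicator 1)) atTop (𝓝 0) := by
    rw [funext (lagCovSup_indicator_one hS hA)]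
    exact h1 A hA
  have hvar := tendsto_variance_birkhoffAverage hS hmixing (hg.comp hS) hgS
  have hmean := tendsto_integral_birkhoffAverage hS h2 (hg.comp hS) hgS
  have hinv : ∫ x, g (S x) ∂ν = ∫ y, g y ∂ν := by
    rw [← integral_map hS.aemeasurable hg.aestronglyMeasurable,
      map_eq_self_of_tendsto_measure_preimage_iterate hS h2]
  rw [show ∫ x, (g ∘ S) x ∂ν = ∫ y, g y ∂ν from hinv] at hmean
  simp_rw [integral_sq_average_eq_integral_sq_birkhoffAverage hS hg (hμn _),
    integral_sub_sq_eq_variance_add (memLp_birkhoffAverage hS (hg.comp hS) hgS _ 2)]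
  simpa using hvar.add ((hmean.sub_const (∫ y, g y ∂ν)).pow 2)

/-- Proposition 3.3: under the uniform mixing-type assumption (1) and asymptotic
stationarity with limit `ν` (2), the measures `μₙ(A) = μ{x : (S(x),…,Sⁿ(x)) ∈ A}`
satisfy `∫ |(Xₙ − ν)g|² dμₙ → 0` for every `g ∈ C_b(E)`. -/
theorem stmt_17 {E : Type*} [MetricSpace E] [TopologicalSpace.SeparableSpace E]
    [MeasurableSpace E] [BorelSpace E]
    (μ ν : Measure E) [IsProbabilityMeasure μ]
    (S : E → E) (hS : Measurable S)
    (h1 : ∀ A : Set E, MeasurableSet A →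
      Tendsto (fun k : ℕ => ⨆ i : ℕ,
        |(μ (S^[i] ⁻¹' A ∩ S^[k] ⁻¹' (S^[i] ⁻¹' A))).toReal -
          (μ (S^[i] ⁻¹' A)).toReal * (μ (S^[k] ⁻¹' (S^[i] ⁻¹' A))).toReal|)
        atTop (nhds 0))
    (h2 : ∀ A : Set E, MeasurableSet A →
      Tendsto (fun k : ℕ => μ (S^[k] ⁻¹' A)) atTop (nhds (ν A)))
    (μn : ∀ n : ℕ, Measure (Fin n → E))
    (hμn : ∀ n, ∀ A : Set (Fin n → E), MeasurableSet A →
      μn n A = μ {x : E | (fun i : Fin n => S^[(i : ℕ) + 1] x) ∈ A}) :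
    ∀ g : BoundedContinuousFunction E ℝ,
      Tendsto (fun n : ℕ =>
          ∫ x : Fin n → E,
            |(1 / (n : ℝ)) * ∑ i : Fin n, g (x i) - ∫ y, g y ∂ν| ^ 2 ∂μn n)
        atTop (nhds 0) :=
  stmt_17_general μ ν S hS h1 h2 μn hμn
end

section
/- Under the assumptions of the previous statement (conditions (1) and (2) on (E, B(E), μ, S) with stationary limit ν), for the special case g = χ_{E_1} the indicator of a Borel set E_1, one has ∫_{E^n} |(1/n)∑_{i=1}^n χ_{E_1}(x_i) − ν(E_1)|² dμ_n = (2/n²)∑_{1≤i<j≤n} μ(S^{-i}E_1 ∩ S^{-j}E_1) + (1/n²)∑_{i=1}^n μ(S^{-i}E_1) − (2ν(E_1)/n)∑_{i=1}^n μ(S^{-i}E_1) + ν(E_1)², and this quantity tends to 0 as n → ∞. -/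
/-!
Pushing `μₙ` forward along `x ↦ (S x, …, Sⁿ x)`, the integral becomes the second moment under `μ`
of the empirical mean of the indicators of `Aᵢ = S⁻ⁱ E₁`, which expands into the pair measures
`μ (Aᵢ ∩ Aⱼ)`. Written as variance plus squared bias, it equals
`n⁻² ∑ᵢⱼ (μ (Aᵢ ∩ Aⱼ) - μ Aᵢ μ Aⱼ) + (n⁻¹ ∑ᵢ μ Aᵢ - ν E₁)²`.
The bias vanishes by Cesàro since `μ Aᵢ → ν E₁`. The covariance of `Aᵢ` and `Aᵢ₊ₖ` is bounded,
uniformly in `i`, by the lag-`k` mixing coefficient of condition (1), so every row of the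
covariance matrix sums to a Cesàro sum of these coefficients, which is `o(n)`.
-/

open MeasureTheory Filter Set Topology

open Finset in
theorem Finset.sum_Icc_one_eq_sum_range {M : Type*} [AddCommMonoid M] (f : ℕ → M) (n : ℕ) :
    ∑ i ∈ Icc 1 n, f i = ∑ i ∈ range n, f (i + 1) := by
  rw [range_eq_Ico, sum_Ico_add', ← Finset.Ico_add_one_right_eq_Icc, zero_add]

open Finset in
theorem Finset.sum_sum_eq_sum_add_two_mul_sum_sum_lt {α R : Type*} [LinearOrder α] [Semiring R]
    (s : Finset α) {m : α → α → R} (hm : ∀ i j, m i j = m j i) :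
    ∑ i ∈ s, ∑ j ∈ s, m i j = ∑ i ∈ s, m i i + 2 * ∑ i ∈ s, ∑ j ∈ s with i < j, m i j := by
  have htri : ∀ i j, m i j = (if i < j then m i j else 0) + (if j = i then m i j else 0)
      + (if j < i then m i j else 0) := fun i j => by
    rcases lt_trichotomy i j with h | rfl | h
    · simp [h, h.ne', h.not_gt]
    · simp
    · simp [h, h.ne, h.not_gt]
  have hlower : ∑ i ∈ s, ∑ j ∈ s, (if j < i then m i j else 0)
      = ∑ i ∈ s, ∑ j ∈ s, (if i < j then m i j else 0) := by
    rw [sum_comm]; simp only [hm]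
  rw [sum_congr rfl fun i _ => sum_congr rfl fun j _ => htri i j]
  simp only [sum_add_distrib, hlower, sum_ite_eq', sum_ite_mem, Finset.inter_self, sum_filter]
  rw [two_mul]; abel

theorem Finset.filter_Icc_one_lt (i n : ℕ) : {j ∈ Finset.Icc 1 n | i < j} = Finset.Ioc i n := by
  ext j; simp only [Finset.mem_filter, Finset.mem_Icc, Finset.mem_Ioc]; omega

open Finset in
theorem abs_sum_Ioc_le_sum_range {d : ℕ → ℕ → ℝ} {b : ℕ → ℝ} (hd : ∀ i k, |d i (i + k)| ≤ b k)
    (i n : ℕ) : |∑ j ∈ Ioc i n, d i j| ≤ ∑ k ∈ range n, b (k + 1) := by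
  have hb : ∀ k, 0 ≤ b k := fun k => (abs_nonneg _).trans (hd 0 k)
  calc |∑ j ∈ Ioc i n, d i j| ≤ ∑ j ∈ Ioc i n, |d i j| := abs_sum_le_sum_abs _ _
    _ = ∑ k ∈ range (n - i), |d i (i + (k + 1))| := by
      rw [← Finset.Ico_add_one_add_one_eq_Ioc, sum_Ico_eq_sum_range, Nat.add_sub_add_right]
      simp only [add_right_comm i 1, add_assoc]
    _ ≤ ∑ k ∈ range (n - i), b (k + 1) := sum_le_sum fun k _ => hd i (k + 1)
    _ ≤ ∑ k ∈ range n, b (k + 1) :=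
      sum_le_sum_of_subset_of_nonneg (range_mono (Nat.sub_le n i)) fun k _ _ => hb (k + 1)

open Finset in
theorem tendsto_sq_inv_mul_sum_Icc_sum_Icc_of_abs_le {d : ℕ → ℕ → ℝ} {b : ℕ → ℝ}
    (hd_symm : ∀ i j, d i j = d j i) (hd : ∀ i k, |d i (i + k)| ≤ b k)
    (hb : Tendsto b atTop (𝓝 0)) :
    Tendsto (fun n : ℕ => (1 / (n : ℝ)) ^ 2 * ∑ i ∈ Icc 1 n, ∑ j ∈ Icc 1 n, d i j) atTop (𝓝 0) := by
  have hrow : ∀ n i, |d i i + 2 * ∑ j ∈ Ioc i n, d i j| ≤ b 0 + 2 * ∑ k ∈ range n, b (k + 1) :=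
    fun n i => by
      calc |d i i + 2 * ∑ j ∈ Ioc i n, d i j|
          ≤ |d i i| + 2 * |∑ j ∈ Ioc i n, d i j| := by
            simpa [abs_mul] using abs_add_le (d i i) (2 * ∑ j ∈ Ioc i n, d i j)
        _ ≤ b 0 + 2 * ∑ k ∈ range n, b (k + 1) := by
            gcongr
            · simpa using hd i 0
            · exact abs_sum_Ioc_le_sum_range hd i n
  have hbound : ∀ n : ℕ, ‖(1 / (n : ℝ)) ^ 2 * ∑ i ∈ Icc 1 n, ∑ j ∈ Icc 1 n, d i j‖
      ≤ (n : ℝ)⁻¹ * b 0 + 2 * ((n : ℝ)⁻¹ * ∑ k ∈ range n, b (k + 1)) := fun n => by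
    rcases n.eq_zero_or_pos with rfl | hn
    · simp
    rw [sum_sum_eq_sum_add_two_mul_sum_sum_lt _ hd_symm, mul_sum, ← sum_add_distrib]
    simp only [filter_Icc_one_lt]
    calc ‖(1 / (n : ℝ)) ^ 2 * ∑ i ∈ Icc 1 n, (d i i + 2 * ∑ j ∈ Ioc i n, d i j)‖
        ≤ (1 / (n : ℝ)) ^ 2 * ∑ i ∈ Icc 1 n, (b 0 + 2 * ∑ k ∈ range n, b (k + 1)) := by
          rw [Real.norm_eq_abs, abs_mul, abs_of_nonneg (by positivity)]
          gcongr
          exact (abs_sum_le_sum_abs _ _).trans (sum_le_sum fun i _ => hrow n i)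
      _ = _ := by
          rw [sum_const, Nat.card_Icc, nsmul_eq_mul, Nat.add_sub_cancel]
          field_simp
  refine squeeze_zero_norm hbound ?_
  simpa using (tendsto_inv_atTop_zero.comp tendsto_natCast_atTop_atTop).mul_const (b 0) |>.add
    (((hb.comp (tendsto_add_atTop_nat 1)).cesaro).const_mul 2)

theorem abs_measureReal_inter_sub_mul_le_one {Ω : Type*} [MeasurableSpace Ω] (μ : Measure Ω)
    [IsProbabilityMeasure μ] (A B : Set Ω) : |μ.real (A ∩ B) - μ.real A * μ.real B| ≤ 1 :=
  abs_sub_le_of_nonneg_of_le measureReal_nonneg measureReal_le_one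
    (mul_nonneg measureReal_nonneg measureReal_nonneg)
    (mul_le_one₀ measureReal_le_one measureReal_nonneg measureReal_le_one)

theorem abs_measureReal_inter_iterate_sub_mul_le_iSup {Ω : Type*} [MeasurableSpace Ω]
    (μ : Measure Ω) [IsProbabilityMeasure μ] (S : Ω → Ω) (A : Set Ω) (i k : ℕ) :
    |μ.real (S^[i] ⁻¹' A ∩ S^[i + k] ⁻¹' A) - μ.real (S^[i] ⁻¹' A) * μ.real (S^[i + k] ⁻¹' A)|
      ≤ ⨆ j : ℕ, |μ.real (S^[j] ⁻¹' A ∩ S^[k] ⁻¹' (S^[j] ⁻¹' A)) -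
          μ.real (S^[j] ⁻¹' A) * μ.real (S^[k] ⁻¹' (S^[j] ⁻¹' A))| := by
  rw [Function.iterate_add, preimage_comp]
  apply le_ciSup (c := i)
  refine ⟨1, ?_⟩
  rintro _ ⟨j, rfl⟩
  exact abs_measureReal_inter_sub_mul_le_one μ _ _

theorem integral_sq_mul_sum_indicator_sub {Ω ι : Type*} [MeasurableSpace Ω] (μ : Measure Ω)
    [IsProbabilityMeasure μ] (s : Finset ι) {A : ι → Set Ω} (hA : ∀ i, MeasurableSet (A i))
    (r c : ℝ) :
    ∫ x, (r * ∑ i ∈ s, (A i).indicator (fun _ => (1 : ℝ)) x - c) ^ 2 ∂μ =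
      r ^ 2 * ∑ i ∈ s, ∑ j ∈ s, μ.real (A i ∩ A j) - 2 * c * r * ∑ i ∈ s, μ.real (A i)
        + c ^ 2 := by
  have hint : ∀ B, MeasurableSet B → Integrable (B.indicator fun _ => (1 : ℝ)) μ :=
    fun B hB => (integrable_const 1).indicator hB
  have hsq : ∀ x, (∑ i ∈ s, (A i).indicator (fun _ => (1 : ℝ)) x) ^ 2
      = ∑ i ∈ s, ∑ j ∈ s, (A i ∩ A j).indicator (fun _ => (1 : ℝ)) x := fun x => by
    rw [sq, Finset.sum_mul_sum]
    exact Finset.sum_congr rfl fun i _ => Finset.sum_congr rfl fun j _ =>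
      (congrFun inter_indicator_one x).symm
  have hpt : ∀ x, (r * ∑ i ∈ s, (A i).indicator (fun _ => (1 : ℝ)) x - c) ^ 2
      = r ^ 2 * ∑ i ∈ s, ∑ j ∈ s, (A i ∩ A j).indicator (fun _ => (1 : ℝ)) x
        - 2 * c * r * ∑ i ∈ s, (A i).indicator (fun _ => (1 : ℝ)) x + c ^ 2 := fun x => by
    rw [← hsq]; ring
  have hpair : ∀ i j, Integrable ((A i ∩ A j).indicator fun _ => (1 : ℝ)) μ :=
    fun i j => hint _ ((hA i).inter (hA j))
  have hquad : Integrable (fun x => r ^ 2 * ∑ i ∈ s, ∑ j ∈ s,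
      (A i ∩ A j).indicator (fun _ => (1 : ℝ)) x) μ :=
    (integrable_finsetSum _ fun i _ => integrable_finsetSum _ fun j _ => hpair i j).const_mul _
  have hlin : Integrable (fun x => 2 * c * r * ∑ i ∈ s, (A i).indicator (fun _ => (1 : ℝ)) x) μ :=
    (integrable_finsetSum _ fun i _ => hint _ (hA i)).const_mul _
  simp_rw [hpt]
  rw [integral_add ?_ (integrable_const _), integral_sub hquad hlin,
    integral_const_mul, integral_const_mul,
    integral_finsetSum _ fun i _ => integrable_finsetSum _ fun j _ => hpair i j,
    integral_finsetSum _ fun i _ => hint _ (hA i)]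
  · simp [integral_finsetSum _ fun j _ => hpair _ j, hA, MeasurableSet.inter]
  · exact hquad.sub hlin

theorem integral_sq_mul_sum_indicator_sub_eq_covariance {Ω ι : Type*} [MeasurableSpace Ω]
    (μ : Measure Ω) [IsProbabilityMeasure μ] (s : Finset ι) {A : ι → Set Ω}
    (hA : ∀ i, MeasurableSet (A i)) (r c : ℝ) :
    ∫ x, (r * ∑ i ∈ s, (A i).indicator (fun _ => (1 : ℝ)) x - c) ^ 2 ∂μ =
      r ^ 2 * ∑ i ∈ s, ∑ j ∈ s, (μ.real (A i ∩ A j) - μ.real (A i) * μ.real (A j))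
        + (r * ∑ i ∈ s, μ.real (A i) - c) ^ 2 := by
  rw [integral_sq_mul_sum_indicator_sub μ s hA]
  simp only [Finset.sum_sub_distrib, ← Finset.sum_mul_sum]
  ring

theorem integral_sq_sub_eq_integral_sum_iterate_preimage {E : Type*} [MeasurableSpace E]
    (μ : Measure E) {S : E → E} (hS : Measurable S) {μn : ∀ n : ℕ, Measure (Fin n → E)}
    (hμn : ∀ n, ∀ A : Set (Fin n → E), MeasurableSet A →
      μn n A = μ {x : E | (fun i : Fin n => S^[(i : ℕ) + 1] x) ∈ A})
    {E₁ : Set E} (hE₁ : MeasurableSet E₁) (n : ℕ) (c : ℝ) :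
    ∫ x : Fin n → E,
        |(1 / (n : ℝ)) * ∑ i : Fin n, E₁.indicator (fun _ => (1 : ℝ)) (x i) - c| ^ 2 ∂μn n
      = ∫ x, ((1 / (n : ℝ)) * ∑ i ∈ Finset.Icc 1 n,
          (S^[i] ⁻¹' E₁).indicator (fun _ => (1 : ℝ)) x - c) ^ 2 ∂μ := by
  have hT : Measurable fun x : E => fun i : Fin n => S^[(i : ℕ) + 1] x :=
    measurable_pi_lambda _ fun i => hS.iterate _
  have hmap : μn n = μ.map fun x : E => fun i : Fin n => S^[(i : ℕ) + 1] x :=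
    Measure.ext fun A hA => (hμn n A hA).trans (Measure.map_apply hT hA).symm
  have hsum : Measurable fun x : Fin n → E => ∑ i, E₁.indicator (fun _ => (1 : ℝ)) (x i) :=
    Finset.measurable_sum _ fun i _ => (measurable_const.indicator hE₁).comp (measurable_pi_apply i)
  rw [hmap, integral_map hT.aemeasurable
    (((hsum.const_mul _).sub_const c).abs.pow_const 2).aestronglyMeasurable]
  refine integral_congr_ae (Eventually.of_forall fun x => ?_)
  dsimp only
  rw [sq_abs, Finset.sum_Icc_one_eq_sum_range, ← Fin.sum_univ_eq_sum_range]
  rfl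

theorem stmt_18_general {E : Type*} [MeasurableSpace E]
    (μ ν : Measure E) [IsProbabilityMeasure μ]
    (S : E → E) (hS : Measurable S)
    (h1 : ∀ A : Set E, MeasurableSet A →
      Tendsto (fun k : ℕ => ⨆ i : ℕ,
        |(μ (S^[i] ⁻¹' A ∩ S^[k] ⁻¹' (S^[i] ⁻¹' A))).toReal -
          (μ (S^[i] ⁻¹' A)).toReal * (μ (S^[k] ⁻¹' (S^[i] ⁻¹' A))).toReal|)
        atTop (nhds 0))
    (h2 : ∀ A : Set E, MeasurableSet A →
      Tendsto (fun k : ℕ => μ (S^[k] ⁻¹' A)) atTop (nhds (ν A)))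
    (μn : ∀ n : ℕ, Measure (Fin n → E))
    (hμn : ∀ n, ∀ A : Set (Fin n → E), MeasurableSet A →
      μn n A = μ {x : E | (fun i : Fin n => S^[(i : ℕ) + 1] x) ∈ A})
    (E₁ : Set E) (hE₁ : MeasurableSet E₁) :
    (∀ n : ℕ,
      ∫ x : Fin n → E,
          |(1 / (n : ℝ)) * ∑ i : Fin n, E₁.indicator (fun _ => (1 : ℝ)) (x i) -
            (ν E₁).toReal| ^ 2 ∂μn n =
        (2 / (n : ℝ) ^ 2) * ∑ i ∈ Finset.Icc 1 n, ∑ j ∈ Finset.Ioc i n,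
            (μ (S^[i] ⁻¹' E₁ ∩ S^[j] ⁻¹' E₁)).toReal
          + (1 / (n : ℝ) ^ 2) * ∑ i ∈ Finset.Icc 1 n, (μ (S^[i] ⁻¹' E₁)).toReal
          - (2 * (ν E₁).toReal / (n : ℝ)) * ∑ i ∈ Finset.Icc 1 n, (μ (S^[i] ⁻¹' E₁)).toReal
          + (ν E₁).toReal ^ 2) ∧
    Tendsto (fun n : ℕ =>
        ∫ x : Fin n → E,
          |(1 / (n : ℝ)) * ∑ i : Fin n, E₁.indicator (fun _ => (1 : ℝ)) (x i) -
            (ν E₁).toReal| ^ 2 ∂μn n)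
      atTop (nhds 0) := by
  set c := (ν E₁).toReal
  simp only [← measureReal_def] at h1 ⊢
  have hA : ∀ i, MeasurableSet (S^[i] ⁻¹' E₁) := fun i => hS.iterate i hE₁
  have hpush := integral_sq_sub_eq_integral_sum_iterate_preimage μ hS hμn hE₁
  refine ⟨fun n => ?_, ?_⟩
  · rw [hpush, integral_sq_mul_sum_indicator_sub μ _ hA,
      Finset.sum_sum_eq_sum_add_two_mul_sum_sum_lt _ fun i j => by rw [inter_comm]]
    simp only [Finset.filter_Icc_one_lt, inter_self]
    ring
  have hν : ν E₁ ≠ ⊤ := ne_top_of_le_ne_top ENNReal.one_ne_top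
    (le_of_tendsto (h2 E₁ hE₁) (.of_forall fun _ => prob_le_one))
  have ha : Tendsto (fun k => μ.real (S^[k] ⁻¹' E₁)) atTop (nhds c) :=
    (ENNReal.tendsto_toReal hν).comp (h2 E₁ hE₁)
  have hmean : Tendsto (fun n : ℕ => 1 / (n : ℝ) * ∑ i ∈ Finset.Icc 1 n, μ.real (S^[i] ⁻¹' E₁))
      atTop (nhds c) := by
    simpa [Finset.sum_Icc_one_eq_sum_range] using (ha.comp (tendsto_add_atTop_nat 1)).cesaro
  have hcov := tendsto_sq_inv_mul_sum_Icc_sum_Icc_of_abs_le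
    (d := fun i j => μ.real (S^[i] ⁻¹' E₁ ∩ S^[j] ⁻¹' E₁) -
      μ.real (S^[i] ⁻¹' E₁) * μ.real (S^[j] ⁻¹' E₁))
    (fun i j => by simp only [inter_comm, mul_comm])
    (abs_measureReal_inter_iterate_sub_mul_le_iSup μ S E₁) (h1 E₁ hE₁)
  simp only [hpush, integral_sq_mul_sum_indicator_sub_eq_covariance μ _ hA]
  simpa using hcov.add ((hmean.sub_const c).pow 2)

/-- The indicator-function case of Proposition 3.3: for `g = χ_{E₁}` the quantity
`∫ |(Xₙ − ν)g|² dμₙ` equals the displayed sum formula and tends to `0`. -/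
theorem stmt_18 {E : Type*} [MetricSpace E] [TopologicalSpace.SeparableSpace E]
    [MeasurableSpace E] [BorelSpace E]
    (μ ν : Measure E) [IsProbabilityMeasure μ]
    (S : E → E) (hS : Measurable S)
    (h1 : ∀ A : Set E, MeasurableSet A →
      Tendsto (fun k : ℕ => ⨆ i : ℕ,
        |(μ (S^[i] ⁻¹' A ∩ S^[k] ⁻¹' (S^[i] ⁻¹' A))).toReal -
          (μ (S^[i] ⁻¹' A)).toReal * (μ (S^[k] ⁻¹' (S^[i] ⁻¹' A))).toReal|)
        atTop (nhds 0))
    (h2 : ∀ A : Set E, MeasurableSet A →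
      Tendsto (fun k : ℕ => μ (S^[k] ⁻¹' A)) atTop (nhds (ν A)))
    (μn : ∀ n : ℕ, Measure (Fin n → E))
    (hμn : ∀ n, ∀ A : Set (Fin n → E), MeasurableSet A →
      μn n A = μ {x : E | (fun i : Fin n => S^[(i : ℕ) + 1] x) ∈ A})
    (E₁ : Set E) (hE₁ : MeasurableSet E₁) :
    (∀ n : ℕ,
      ∫ x : Fin n → E,
          |(1 / (n : ℝ)) * ∑ i : Fin n, E₁.indicator (fun _ => (1 : ℝ)) (x i) -
            (ν E₁).toReal| ^ 2 ∂μn n =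
        (2 / (n : ℝ) ^ 2) * ∑ i ∈ Finset.Icc 1 n, ∑ j ∈ Finset.Ioc i n,
            (μ (S^[i] ⁻¹' E₁ ∩ S^[j] ⁻¹' E₁)).toReal
          + (1 / (n : ℝ) ^ 2) * ∑ i ∈ Finset.Icc 1 n, (μ (S^[i] ⁻¹' E₁)).toReal
          - (2 * (ν E₁).toReal / (n : ℝ)) * ∑ i ∈ Finset.Icc 1 n, (μ (S^[i] ⁻¹' E₁)).toReal
          + (ν E₁).toReal ^ 2) ∧
    Tendsto (fun n : ℕ =>
        ∫ x : Fin n → E,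
          |(1 / (n : ℝ)) * ∑ i : Fin n, E₁.indicator (fun _ => (1 : ℝ)) (x i) -
            (ν E₁).toReal| ^ 2 ∂μn n)
      atTop (nhds 0) :=
  stmt_18_general μ ν S hS h1 h2 μn hμn E₁ hE₁
end
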